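/- arXiv:2507.13711 — 2 statements merged into one kernel-verified Lean document; each statement's English description precedes it below -/
import Mathlib

section
/- Let k be an admissible kernel with parameters (s, κ₁, κ₂), s ∈ (0,1), κ₂ ≥ κ₁ > 0. Given λ, R > 0, let v(x) := e^{λx₁} χ_{B_{2R}}(x) for x ∈ ℝⁿ. Then there exists a constant C ≥ 1, depending only on n, s, κ₁, and κ₂, such that if λR ≥ C, then L_k v(x) ≤ −(1/C) · (e^{λR/2} / (λ R^{1+2s})) · v(x) for every x ∈ B_R. -/
open Filter MeasureTheory Metric Set
open scoped Topology NNReal ENNReal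

noncomputable section

/-- `ℝⁿ` with its Euclidean structure. -/
abbrev Euc (n : ℕ) : Type := EuclideanSpace ℝ (Fin n)

/-- An admissible kernel with parameters `(s, κ₁, κ₂)`: symmetric and comparable to
`|z| ^ (-n - 2s)`. -/
def IsAdmissibleKernel (n : ℕ) (s κ₁ κ₂ : ℝ) (k : Euc n → ℝ) : Prop :=
  Measurable k ∧ (∀ z, k (-z) = k z) ∧
    ∀ᵐ z ∂(volume : Measure (Euc n)),
      κ₁ / ‖z‖ ^ ((n : ℝ) + 2 * s) ≤ k z ∧ k z ≤ κ₂ / ‖z‖ ^ ((n : ℝ) + 2 * s)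

/-- The truncated integrals whose limit defines the principal value `L_k u (x)`. -/
def LkTrunc {n : ℕ} (k u : Euc n → ℝ) (x : Euc n) (ε : ℝ) : ℝ :=
  ∫ z in {z : Euc n | ε ≤ ‖z‖}, (u x - u (x + z)) * k z

/-- `L_k u (x) = L`, in the principal value sense. -/
def LkHas {n : ℕ} (k u : Euc n → ℝ) (x : Euc n) (L : ℝ) : Prop :=
  Tendsto (LkTrunc k u x) (𝓝[>] (0 : ℝ)) (𝓝 L)

/-- The principal value defining `L_k u (x)` exists. -/
def LkExistsAt {n : ℕ} (k u : Euc n → ℝ) (x : Euc n) : Prop := ∃ L, LkHas k u x L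

/-- The nonlocal operator `L_k`, as a principal value. -/
def Lk {n : ℕ} (k u : Euc n → ℝ) (x : Euc n) : ℝ :=
  limUnder (𝓝[>] (0 : ℝ)) (LkTrunc k u x)

/-- The second differential of `u`. -/
def D2 {n : ℕ} (u : Euc n → ℝ) : Euc n → Euc n →L[ℝ] Euc n →L[ℝ] ℝ :=
  fderiv ℝ (fderiv ℝ u)

/-- The Laplacian of `u`. -/
def lapl {n : ℕ} (u : Euc n → ℝ) (x : Euc n) : ℝ :=
  ∑ i : Fin n, D2 u x (EuclideanSpace.single i (1 : ℝ)) (EuclideanSpace.single i (1 : ℝ))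

/-- Distance to the boundary of `Ω`. -/
def dB {n : ℕ} (Ω : Set (Euc n)) (x : Euc n) : ℝ := infDist x (frontier Ω)

/-- `d_{x,y} = min (d_x, d_y)`. -/
def dB2 {n : ℕ} (Ω : Set (Euc n)) (x y : Euc n) : ℝ := min (dB Ω x) (dB Ω y)

/-- The set of values `w x * ‖v x‖`, `x ∈ Ω`. -/
def wSupSet {n : ℕ} {X : Type*} [NormedAddCommGroup X] (Ω : Set (Euc n)) (w : Euc n → ℝ)
    (v : Euc n → X) : Set ℝ :=
  {r | ∃ x ∈ Ω, r = w x * ‖v x‖}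

/-- `sup_{x ∈ Ω} w x * ‖v x‖`. -/
def wSup {n : ℕ} {X : Type*} [NormedAddCommGroup X] (Ω : Set (Euc n)) (w : Euc n → ℝ)
    (v : Euc n → X) : ℝ :=
  sSup (wSupSet Ω w v)

/-- The set of values `w x y * ‖v x - v y‖ / ‖x - y‖ ^ β`, `x ≠ y ∈ Ω`. -/
def wHolderSet {n : ℕ} {X : Type*} [NormedAddCommGroup X] (Ω : Set (Euc n))
    (w : Euc n → Euc n → ℝ) (β : ℝ) (v : Euc n → X) : Set ℝ :=
  {r | ∃ x ∈ Ω, ∃ y ∈ Ω, x ≠ y ∧ r = w x y * (‖v x - v y‖ / ‖x - y‖ ^ β)}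

/-- Weighted Hölder seminorm of exponent `β` and weight `w`. -/
def wHolder {n : ℕ} {X : Type*} [NormedAddCommGroup X] (Ω : Set (Euc n))
    (w : Euc n → Euc n → ℝ) (β : ℝ) (v : Euc n → X) : ℝ :=
  sSup (wHolderSet Ω w β v)

/-- The (unweighted) `C^β(Ω)` norm. -/
def normCbeta {n : ℕ} {X : Type*} [NormedAddCommGroup X] (Ω : Set (Euc n)) (β : ℝ)
    (v : Euc n → X) : ℝ :=
  wSup Ω (fun _ => 1) v + wHolder Ω (fun _ _ => 1) β v

/-- Membership in (unweighted) `C^β(Ω)`: bounded and uniformly `β`-Hölder. -/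
def MemCbeta {n : ℕ} {X : Type*} [NormedAddCommGroup X] (Ω : Set (Euc n)) (β : ℝ)
    (v : Euc n → X) : Prop :=
  BddAbove (wSupSet Ω (fun _ => 1) v) ∧ BddAbove (wHolderSet Ω (fun _ _ => 1) β v)

/-- The (unweighted) `C^{1,β}(Ω)` norm. -/
def normC1beta {n : ℕ} (Ω : Set (Euc n)) (β : ℝ) (u : Euc n → ℝ) : ℝ :=
  wSup Ω (fun _ => 1) u + wSup Ω (fun _ => 1) (fderiv ℝ u) +
    wHolder Ω (fun _ _ => 1) β (fderiv ℝ u)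

/-- Membership in (unweighted) `C^{1,β}(Ω)`. -/
def MemC1beta {n : ℕ} (Ω : Set (Euc n)) (β : ℝ) (u : Euc n → ℝ) : Prop :=
  ContDiffOn ℝ 1 u Ω ∧ BddAbove (wSupSet Ω (fun _ => 1) u) ∧
    BddAbove (wSupSet Ω (fun _ => 1) (fderiv ℝ u)) ∧
    BddAbove (wHolderSet Ω (fun _ _ => 1) β (fderiv ℝ u))

/-- The (unweighted) `C^{2,β}(Ω)` norm. -/
def normC2beta {n : ℕ} (Ω : Set (Euc n)) (β : ℝ) (u : Euc n → ℝ) : ℝ :=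
  wSup Ω (fun _ => 1) u + wSup Ω (fun _ => 1) (fderiv ℝ u) + wSup Ω (fun _ => 1) (D2 u) +
    wHolder Ω (fun _ _ => 1) β (D2 u)

/-- Membership in (unweighted) `C^{2,β}(Ω)`. -/
def MemC2beta {n : ℕ} (Ω : Set (Euc n)) (β : ℝ) (u : Euc n → ℝ) : Prop :=
  ContDiffOn ℝ 2 u Ω ∧ BddAbove (wSupSet Ω (fun _ => 1) u) ∧
    BddAbove (wSupSet Ω (fun _ => 1) (fderiv ℝ u)) ∧
    BddAbove (wSupSet Ω (fun _ => 1) (D2 u)) ∧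
    BddAbove (wHolderSet Ω (fun _ _ => 1) β (D2 u))

/-- The weighted norm `‖u‖_{C⁰₁(Ω)} = sup d_x⁻¹ |u x|`. -/
def normC01 {n : ℕ} (Ω : Set (Euc n)) (u : Euc n → ℝ) : ℝ :=
  wSup Ω (fun x => (dB Ω x)⁻¹) u

/-- The weighted norm `‖u‖_{C²₁(Ω)}`. -/
def normC21 {n : ℕ} (Ω : Set (Euc n)) (u : Euc n → ℝ) : ℝ :=
  normC01 Ω u + wSup Ω (fun _ => 1) (fderiv ℝ u) + wSup Ω (fun x => dB Ω x) (D2 u)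

/-- Membership in `C²₁(Ω)`. -/
def MemC21 {n : ℕ} (Ω : Set (Euc n)) (u : Euc n → ℝ) : Prop :=
  ContDiffOn ℝ 2 u Ω ∧ BddAbove (wSupSet Ω (fun x => (dB Ω x)⁻¹) u) ∧
    BddAbove (wSupSet Ω (fun _ => 1) (fderiv ℝ u)) ∧
    BddAbove (wSupSet Ω (fun x => dB Ω x) (D2 u))

/-- The weighted norm `‖u‖_{C^{2,β}₁(Ω)}`. -/
def normC2beta1 {n : ℕ} (Ω : Set (Euc n)) (β : ℝ) (u : Euc n → ℝ) : ℝ :=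
  normC21 Ω u + wHolder Ω (fun x y => dB2 Ω x y ^ (1 + β)) β (D2 u)

/-- Membership in `C^{2,β}₁(Ω)`. -/
def MemC2beta1 {n : ℕ} (Ω : Set (Euc n)) (β : ℝ) (u : Euc n → ℝ) : Prop :=
  MemC21 Ω u ∧ BddAbove (wHolderSet Ω (fun x y => dB2 Ω x y ^ (1 + β)) β (D2 u))

/-- The weighted norm `‖u‖_{C²_{γ,⋆}(Ω)}`. -/
def normC2gammaStar {n : ℕ} (Ω : Set (Euc n)) (γ : ℝ) (u : Euc n → ℝ) : ℝ :=
  normC01 Ω u + wSup Ω (fun _ => 1) (fderiv ℝ u) + wSup Ω (fun x => dB Ω x ^ γ) (D2 u)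

/-- Membership in `C²_{γ,⋆}(Ω)`. -/
def MemC2gammaStar {n : ℕ} (Ω : Set (Euc n)) (γ : ℝ) (u : Euc n → ℝ) : Prop :=
  ContDiffOn ℝ 2 u Ω ∧ BddAbove (wSupSet Ω (fun x => (dB Ω x)⁻¹) u) ∧
    BddAbove (wSupSet Ω (fun _ => 1) (fderiv ℝ u)) ∧
    BddAbove (wSupSet Ω (fun x => dB Ω x ^ γ) (D2 u))

/-- The weighted norm `‖u‖_{C^{2,β}_{γ,⋆}(Ω)}`. -/
def normC2betagammaStar {n : ℕ} (Ω : Set (Euc n)) (β γ : ℝ) (u : Euc n → ℝ) : ℝ :=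
  normC2gammaStar Ω γ u + wHolder Ω (fun x y => dB2 Ω x y ^ (β + γ)) β (D2 u)

/-- Membership in `C^{2,β}_{γ,⋆}(Ω)`. -/
def MemC2betagammaStar {n : ℕ} (Ω : Set (Euc n)) (β γ : ℝ) (u : Euc n → ℝ) : Prop :=
  MemC2gammaStar Ω γ u ∧ BddAbove (wHolderSet Ω (fun x y => dB2 Ω x y ^ (β + γ)) β (D2 u))

/-- The weighted norm `‖f‖_{C^β_γ(Ω)}`. -/
def normCbetagamma {n : ℕ} (Ω : Set (Euc n)) (β γ : ℝ) (f : Euc n → ℝ) : ℝ :=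
  wSup Ω (fun x => dB Ω x ^ γ) f + wHolder Ω (fun x y => dB2 Ω x y ^ (β + γ)) β f

/-- Membership in `C^β_γ(Ω)`. -/
def MemCbetagamma {n : ℕ} (Ω : Set (Euc n)) (β γ : ℝ) (f : Euc n → ℝ) : Prop :=
  ContinuousOn f Ω ∧ BddAbove (wSupSet Ω (fun x => dB Ω x ^ γ) f) ∧
    BddAbove (wHolderSet Ω (fun x y => dB2 Ω x y ^ (β + γ)) β f)

/-- `Ω` has boundary which is locally (after a rigid motion) the graph of a function of
class `P`, with `Ω` lying locally on one side of it. -/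
def BoundaryOfClass (n : ℕ) (Ω : Set (Euc n)) (P : (Euc (n - 1) → ℝ) → Prop) : Prop :=
  ∀ x ∈ frontier Ω, ∃ hn : 0 < n, ∃ r > (0 : ℝ), ∃ F : Euc n ≃ₗᵢ[ℝ] Euc n,
    ∃ h : Euc (n - 1) → ℝ, P h ∧ ∀ y ∈ ball x r,
      (y ∈ Ω ↔
        h (WithLp.toLp 2 (fun i : Fin (n - 1) => F (y - x) (Fin.castLE (Nat.sub_le n 1) i))) <
          F (y - x) ⟨n - 1, Nat.sub_lt hn Nat.one_pos⟩)

/-- A `C²` function with globally `β`-Hölder continuous second derivative. -/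
def IsC2HolderFun (m : ℕ) (β : ℝ) (h : Euc m → ℝ) : Prop :=
  ContDiff ℝ 2 h ∧ ∃ C : ℝ, ∀ y z, ‖D2 h y - D2 h z‖ ≤ C * ‖y - z‖ ^ β

/-- `Ω` has boundary of class `C^{2,β}`. -/
def BoundaryC2Holder (n : ℕ) (β : ℝ) (Ω : Set (Euc n)) : Prop :=
  BoundaryOfClass n Ω (IsC2HolderFun (n - 1) β)

/-- `Ω` has boundary of class `C²`. -/
def BoundaryC2 (n : ℕ) (Ω : Set (Euc n)) : Prop :=
  BoundaryOfClass n Ω (fun h => ContDiff ℝ 2 h)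

/-- `Ω` has Lipschitz boundary. -/
def BoundaryLipschitz (n : ℕ) (Ω : Set (Euc n)) : Prop :=
  BoundaryOfClass n Ω (fun h => ∃ L : ℝ≥0, LipschitzWith L h)

/-- `Ω` has the exterior ball property. -/
def ExteriorBall (n : ℕ) (Ω : Set (Euc n)) : Prop :=
  ∃ r₀ > (0 : ℝ), ∀ z ∈ frontier Ω, ∃ y ∉ Ω, closedBall y r₀ ∩ closure Ω = {z}

/-- `u` solves the mixed local-nonlocal Dirichlet problem
`p (-Δ)u + q L_k u + g ⋅ Du = f` in `Ω`, `u = 0` on `∂Ω`, `u = 0` in `ℝⁿ ∖ Ω̄`. -/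
def SolvesDir {n : ℕ} (Ω : Set (Euc n)) (k p q : Euc n → ℝ) (g : Euc n → Euc n)
    (f u : Euc n → ℝ) : Prop :=
  ContDiffOn ℝ 2 u Ω ∧ Continuous u ∧ (∀ x ∈ Ω, LkExistsAt k u x) ∧
    (∀ x ∈ Ω, p x * (-lapl u x) + q x * Lk k u x + fderiv ℝ u x (g x) = f x) ∧
    (∀ x ∈ frontier Ω, u x = 0) ∧ ∀ x ∈ (closure Ω)ᶜ, u x = 0

/-- `u` solves the Poisson problem `-Δu = f` in `Ω`, `u = 0` on `∂Ω`,
in the class `C²(Ω) ∩ C⁰(Ω̄)`. -/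
def PoissonSol {n : ℕ} (Ω : Set (Euc n)) (f u : Euc n → ℝ) : Prop :=
  ContDiffOn ℝ 2 u Ω ∧ ContinuousOn u (closure Ω) ∧ (∀ x ∈ Ω, -lapl u x = f x) ∧
    ∀ x ∈ frontier Ω, u x = 0

/-- The last ("vertical") coordinate of a point of `ℝ^{d+1}`. -/
def xlast {d : ℕ} (x : Euc (d + 1)) : ℝ := x (Fin.last d)

/-- The norm of the horizontal part `x'` of a point of `ℝ^{d+1}`. -/
def xinitNorm {d : ℕ} (x : Euc (d + 1)) : ℝ :=
  ‖x - xlast x • EuclideanSpace.single (Fin.last d) (1 : ℝ)‖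

/-- The cylinder `𝒞_r = B'_r × (-r, r)`. -/
def cyl (d : ℕ) (r : ℝ) : Set (Euc (d + 1)) := {x | xinitNorm x < r ∧ |xlast x| < r}

/-- The upper half-cylinder `𝒞_r⁺ = B'_r × (0, r)`. -/
def cylP (d : ℕ) (r : ℝ) : Set (Euc (d + 1)) :=
  {x | xinitNorm x < r ∧ 0 < xlast x ∧ xlast x < r}

/-- The disk `𝒟_r = B'_r × {0}`. -/
def disk (d : ℕ) (r : ℝ) : Set (Euc (d + 1)) := {x | xinitNorm x < r ∧ xlast x = 0}

/-- Reflection across the hyperplane `{x_n = 0}`. -/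
def reflPt {d : ℕ} (x : Euc (d + 1)) : Euc (d + 1) :=
  x - (2 * xlast x) • EuclideanSpace.single (Fin.last d) (1 : ℝ)

/-- The odd reflection `f°` of `f` across `{x_n = 0}`. -/
def oddRefl {d : ℕ} (f : Euc (d + 1) → ℝ) (x : Euc (d + 1)) : ℝ :=
  if 0 < xlast x then f x else if xlast x < 0 then -f (reflPt x) else 0

/-- The fundamental solution of `-Δ` in `ℝⁿ`. -/
def fundSol (n : ℕ) (z : Euc n) : ℝ :=
  if n = 2 then -(2 * Real.pi)⁻¹ * Real.log ‖z‖
  else ((n : ℝ) * ((n : ℝ) - 2) * (volume (ball (0 : Euc n) 1)).toReal)⁻¹ *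
    ‖z‖ ^ (2 - (n : ℝ))

/-- The norm `‖f‖_{C̃^β_γ(𝒞_r⁺)}`. -/
def tnormBG (d : ℕ) {X : Type*} [NormedAddCommGroup X] (r β γ : ℝ) (v : Euc (d + 1) → X) : ℝ :=
  wSup (cylP d r) (fun x => xlast x ^ γ) v +
    wHolder (cylP d r) (fun x y => min (xlast x) (xlast y) ^ (β + γ)) β v

/-- Membership in `C̃^β_γ(𝒞_r⁺)`. -/
def tMemBG (d : ℕ) {X : Type*} [NormedAddCommGroup X] (r β γ : ℝ) (v : Euc (d + 1) → X) : Prop :=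
  BddAbove (wSupSet (cylP d r) (fun x => xlast x ^ γ) v) ∧
    BddAbove (wHolderSet (cylP d r) (fun x y => min (xlast x) (xlast y) ^ (β + γ)) β v)

/-- The norm `‖w‖_{C̃^{2,β}_{γ,⋆}(𝒞_r⁺)}`. -/
def tnormC2 (d : ℕ) (r β γ : ℝ) (w : Euc (d + 1) → ℝ) : ℝ :=
  wSup (cylP d r) (fun x => (xlast x)⁻¹) w + wSup (cylP d r) (fun _ => 1) (fderiv ℝ w) +
    tnormBG d r β γ (D2 w)

/-- Membership in `C̃^{2,β}_{γ,⋆}(𝒞_r⁺)`. -/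
def tMemC2 (d : ℕ) (r β γ : ℝ) (w : Euc (d + 1) → ℝ) : Prop :=
  ContDiffOn ℝ 2 w (cylP d r) ∧ BddAbove (wSupSet (cylP d r) (fun x => (xlast x)⁻¹) w) ∧
    BddAbove (wSupSet (cylP d r) (fun _ => 1) (fderiv ℝ w)) ∧ tMemBG d r β γ (D2 w)

end

/-! For `x ∈ B_R` and `|z| < R` both `x ± z` lie in `B_{2R}`, so the second difference of `v`
at `x` is `-2 v(x) (cosh (λ z₁) - 1) ≤ 0`. It is `O(|z|²)`, so after symmetrisation the principal
value is an absolutely convergent integral. On the ball `B(3R/4 e₁, R/8) ⊆ B_R` one has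
`cosh (λ z₁) - 1 ≥ e^{λR/2} / 4` and `k ≥ κ₁ R^{-n-2s}`, a contribution of order
`-v(x) e^{λR/2} R^{-2s}`; outside `B_R` the second difference is at most `2 v(x)`, a contribution
`O(v(x) R^{-2s})`. For `λR` large the exponential term wins. -/

theorem setOf_le_norm_eq_compl_ball {E : Type*} [NormedAddCommGroup E] (r : ℝ) :
    {z : E | r ≤ ‖z‖} = (ball 0 r)ᶜ := by
  ext; simp

theorem indicator_setOf_le_norm_rpow {E : Type*} [NormedAddCommGroup E] (p R : ℝ) :
    ({z : E | R ≤ ‖z‖}.indicator fun z => ‖z‖ ^ (-p)) =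
      fun z => (Ici R).indicator (fun y : ℝ => y ^ (-p)) ‖z‖ := by
  ext z; simp [Set.indicator]

theorem eqOn_pow_smul_indicator_rpow {d : ℕ} (hd : 0 < d) (p R : ℝ) :
    EqOn (fun y : ℝ => y ^ (d - 1) • (Ici R).indicator (fun y => y ^ (-p)) y)
      ((Ici R).indicator fun y => y ^ ((d : ℝ) - 1 - p)) (Ioi 0) := by
  intro y (hy : 0 < y)
  dsimp only
  by_cases h : y ∈ Ici R
  · rw [indicator_of_mem h, indicator_of_mem h, smul_eq_mul, ← Real.rpow_natCast,
      ← Real.rpow_add hy, Nat.cast_sub hd, Nat.cast_one, sub_eq_add_neg _ p]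
  · rw [indicator_of_notMem h, indicator_of_notMem h, smul_zero]

theorem MeasureTheory.Measure.addHaar_real_ball_of_pos {E : Type*} [NormedAddCommGroup E]
    [NormedSpace ℝ E] [FiniteDimensional ℝ E] [MeasurableSpace E] [BorelSpace E] (μ : Measure E)
    [μ.IsAddHaarMeasure] (x : E) {r : ℝ} (hr : 0 < r) :
    μ.real (ball x r) = r ^ Module.finrank ℝ E * μ.real (ball 0 1) := by
  rw [Measure.real, μ.addHaar_ball_of_pos x hr, ENNReal.toReal_mul,
    ENNReal.toReal_ofReal (by positivity), Measure.real]

section Radial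

variable {E : Type*} [NormedAddCommGroup E] [NormedSpace ℝ E] [FiniteDimensional ℝ E]
  [MeasurableSpace E] [BorelSpace E] (μ : Measure E) [μ.IsAddHaarMeasure]

theorem setIntegral_eq_half_setIntegral_add_comp_neg {f : E → ℝ} {s : Set E} (hs : -s = s)
    (hf : IntegrableOn f s μ) : ∫ z in s, f z ∂μ = (1 / 2) * ∫ z in s, (f z + f (-z)) ∂μ := by
  have hneg := Measure.measurePreserving_neg μ
  have hemb := (MeasurableEquiv.neg E).measurableEmbedding
  have hcomp : ∫ z in s, f (-z) ∂μ = ∫ z in s, f z ∂μ := by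
    simpa only [Set.neg_preimage, hs] using hneg.setIntegral_preimage_emb hemb f s
  have hf' : IntegrableOn (fun z => f (-z)) s μ := by
    simpa only [Set.neg_preimage, hs, Function.comp_def] using
      (hneg.integrableOn_comp_preimage hemb).2 hf
  rw [integral_add hf hf', hcomp]
  ring

variable [Nontrivial E]

theorem tendsto_measure_ball_zero_nhdsGT :
    Tendsto (fun ε => μ (ball (0 : E) ε)) (𝓝[>] 0) (𝓝 0) := by
  have hpow : Tendsto (fun ε : ℝ => ENNReal.ofReal (ε ^ Module.finrank ℝ E) * μ (ball 0 1))
      (𝓝 0) (𝓝 0) := by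
    have h := ENNReal.Tendsto.mul_const (ENNReal.tendsto_ofReal
      ((continuous_pow (Module.finrank ℝ E)).tendsto' (0 : ℝ) 0
        (zero_pow Module.finrank_pos.ne')))
      (Or.inr (measure_ball_lt_top (μ := μ) (x := 0) (r := 1)).ne)
    simpa using h
  refine (hpow.mono_left nhdsWithin_le_nhds).congr' ?_
  filter_upwards [self_mem_nhdsWithin] with ε hε
  exact (μ.addHaar_ball_of_pos 0 hε).symm

theorem tendsto_setIntegral_setOf_le_norm {g : E → ℝ} (hg : Integrable g μ) :
    Tendsto (fun ε => ∫ z in {z | ε ≤ ‖z‖}, g z ∂μ) (𝓝[>] 0) (𝓝 (∫ z, g z ∂μ)) := by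
  have hcompl (ε : ℝ) :
      ∫ z in {z | ε ≤ ‖z‖}, g z ∂μ = ∫ z, g z ∂μ - ∫ z in ball 0 ε, g z ∂μ := by
    rw [← integral_add_compl (measurableSet_ball (x := (0 : E)) (ε := ε)) hg,
      setOf_le_norm_eq_compl_ball, add_sub_cancel_left]
  simpa only [hcompl, sub_zero] using
    (hg.tendsto_setIntegral_nhds_zero (tendsto_measure_ball_zero_nhdsGT μ)).const_sub _

theorem integrableOn_norm_rpow_neg_setOf_le_norm {p R : ℝ}
    (hp : (Module.finrank ℝ E : ℝ) < p) (hR : 0 < R) :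
    IntegrableOn (fun z => ‖z‖ ^ (-p)) {z | R ≤ ‖z‖} μ := by
  rw [← integrable_indicator_iff (measurableSet_le measurable_const measurable_norm),
    indicator_setOf_le_norm_rpow, integrable_fun_norm_addHaar μ,
    integrableOn_congr_fun (eqOn_pow_smul_indicator_rpow Module.finrank_pos _ _)
      measurableSet_Ioi]
  refine ((integrable_indicator_iff measurableSet_Ici).2 ?_).integrableOn
  rw [integrableOn_Ici_iff_integrableOn_Ioi, integrableOn_Ioi_rpow_iff hR]
  linarith

theorem setIntegral_norm_rpow_neg_setOf_le_norm {p R : ℝ}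
    (hp : (Module.finrank ℝ E : ℝ) < p) (hR : 0 < R) :
    ∫ z in {z | R ≤ ‖z‖}, ‖z‖ ^ (-p) ∂μ =
      Module.finrank ℝ E * μ.real (ball 0 1) * R ^ ((Module.finrank ℝ E : ℝ) - p) /
        (p - Module.finrank ℝ E) := by
  rw [← integral_indicator (measurableSet_le measurable_const measurable_norm),
    indicator_setOf_le_norm_rpow, integral_fun_norm_addHaar μ,
    setIntegral_congr_fun measurableSet_Ioi
      (eqOn_pow_smul_indicator_rpow Module.finrank_pos _ _),
    integral_indicator measurableSet_Ici, Measure.restrict_restrict measurableSet_Ici,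
    inter_eq_left.2 (Ici_subset_Ioi.2 hR), integral_Ici_eq_integral_Ioi,
    integral_Ioi_rpow_of_lt (by linarith) hR, sub_right_comm, sub_add_cancel]
  rw [neg_div, ← div_neg, neg_sub, nsmul_eq_mul, smul_eq_mul]
  ring

end Radial

def secondDiff {E : Type*} [AddCommGroup E] (u : E → ℝ) (x z : E) : ℝ :=
  2 * u x - u (x + z) - u (x - z)

theorem secondDiff_le_two_mul {E : Type*} [AddCommGroup E] {u : E → ℝ} (hu : ∀ y, 0 ≤ u y)
    (x z : E) : secondDiff u x z ≤ 2 * u x := by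
  rw [secondDiff]
  linarith [hu (x + z), hu (x - z)]

theorem abs_secondDiff_le {E : Type*} [AddCommGroup E] {u : E → ℝ} {B : ℝ}
    (hu : ∀ y, 0 ≤ u y) (huB : ∀ y, u y ≤ B) (x z : E) : |secondDiff u x z| ≤ 2 * B := by
  rw [secondDiff, abs_le]
  constructor <;> linarith [hu x, hu (x + z), hu (x - z), huB x, huB (x + z), huB (x - z)]

theorem lkHas_half_integral_secondDiff {n : ℕ} [NeZero n] {k u : Euc n → ℝ} {x : Euc n}
    (hk : ∀ z, k (-z) = k z)
    (hf : ∀ ε > 0, IntegrableOn (fun z => (u x - u (x + z)) * k z) {z | ε ≤ ‖z‖})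
    (hδ : Integrable fun z => secondDiff u x z * k z) :
    LkHas k u x ((1 / 2) * ∫ z, secondDiff u x z * k z) := by
  have htrunc : ∀ ε > 0,
      LkTrunc k u x ε = (1 / 2) * ∫ z in {z | ε ≤ ‖z‖}, secondDiff u x z * k z := by
    intro ε hε
    rw [LkTrunc, setIntegral_eq_half_setIntegral_add_comp_neg volume (by ext; simp) (hf ε hε)]
    congr 2
    ext z
    rw [hk, secondDiff, ← sub_eq_add_neg]
    ring
  refine ((tendsto_setIntegral_setOf_le_norm volume hδ).const_mul (1 / 2)).congr' ?_
  filter_upwards [self_mem_nhdsWithin] with ε hε using (htrunc ε hε).symm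

/-- `|B(3R/4 e_i, R/8)| κ₁ R^{-n-2s} / 4 = capConst n κ₁ R^{-2s}`. -/
noncomputable def capConst (n : ℕ) (κ₁ : ℝ) : ℝ :=
  κ₁ * volume.real (ball (0 : Euc n) 1) / (4 * 8 ^ n)

/-- `κ₂ ∫_{|z| ≥ R} |z|^{-n-2s} dz = tailConst n s κ₂ R^{-2s}`. -/
noncomputable def tailConst (n : ℕ) (s κ₂ : ℝ) : ℝ :=
  κ₂ * n * volume.real (ball (0 : Euc n) 1) / (2 * s)

theorem capConst_pos {n : ℕ} {κ₁ : ℝ} (hκ₁ : 0 < κ₁) : 0 < capConst n κ₁ := by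
  have : 0 < volume.real (ball (0 : Euc n) 1) :=
    ENNReal.toReal_pos (measure_ball_pos _ _ one_pos).ne' measure_ball_lt_top.ne
  unfold capConst
  positivity

namespace IsAdmissibleKernel

variable {n : ℕ} {s κ₁ κ₂ : ℝ} {k : Euc n → ℝ}

theorem nonneg_ae (hk : IsAdmissibleKernel n s κ₁ κ₂ k) (hκ₁ : 0 ≤ κ₁) : ∀ᵐ z, 0 ≤ k z := by
  filter_upwards [hk.2.2] with z hz
  exact (div_nonneg hκ₁ (Real.rpow_nonneg (norm_nonneg z) _)).trans hz.1

theorem abs_le_ae (hk : IsAdmissibleKernel n s κ₁ κ₂ k) (hκ₁ : 0 ≤ κ₁) :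
    ∀ᵐ z, |k z| ≤ κ₂ * ‖z‖ ^ (-((n : ℝ) + 2 * s)) := by
  filter_upwards [hk.2.2, hk.nonneg_ae hκ₁] with z hz hz0
  rw [abs_of_nonneg hz0, Real.rpow_neg (norm_nonneg z), ← div_eq_mul_inv]
  exact hz.2

theorem integrableOn_mul_setOf_le_norm [NeZero n] (hk : IsAdmissibleKernel n s κ₁ κ₂ k)
    (hs : 0 < s) (hκ₁ : 0 ≤ κ₁) {g : Euc n → ℝ} (hg : AEStronglyMeasurable g) {B R : ℝ}
    (hgB : ∀ z, |g z| ≤ B) (hR : 0 < R) :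
    IntegrableOn (fun z => g z * k z) {z | R ≤ ‖z‖} := by
  have hp : (Module.finrank ℝ (Euc n) : ℝ) < n + 2 * s := by
    rw [finrank_euclideanSpace_fin]; linarith
  refine ((integrableOn_norm_rpow_neg_setOf_le_norm volume hp hR).const_mul (B * κ₂)).mono'
    (hg.mul hk.1.aestronglyMeasurable).restrict (ae_restrict_of_ae ?_)
  filter_upwards [hk.abs_le_ae hκ₁] with z hz
  rw [Real.norm_eq_abs, abs_mul, mul_assoc]
  exact mul_le_mul (hgB z) hz (abs_nonneg _) ((abs_nonneg _).trans (hgB z))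

theorem integrableOn_ball_mul [NeZero n] (hk : IsAdmissibleKernel n s κ₁ κ₂ k)
    (hs : s < 1) (hκ₁ : 0 ≤ κ₁) {g : Euc n → ℝ} (hg : AEStronglyMeasurable g) {B R : ℝ}
    (hgB : ∀ z ∈ ball (0 : Euc n) R, |g z| ≤ B * ‖z‖ ^ 2) :
    IntegrableOn (fun z => g z * k z) (ball 0 R) := by
  have hd : 1 ≤ Module.finrank ℝ (Euc n) := by
    rw [finrank_euclideanSpace_fin]; exact Nat.one_le_iff_ne_zero.2 (NeZero.ne n)
  refine integrableOn_ball_of_norm_le_rpow (C := B * κ₂) (α := n + 2 * s - 2) hd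
    (by rw [finrank_euclideanSpace_fin]; linarith) ?_ (hg.mul hk.1.aestronglyMeasurable)
  filter_upwards [ae_restrict_of_ae (hk.abs_le_ae hκ₁), ae_restrict_of_ae (Measure.ae_ne _ 0),
    ae_restrict_mem measurableSet_ball] with z hz hz0 hzR
  have hB : 0 ≤ B * ‖z‖ ^ 2 := (abs_nonneg _).trans (hgB z hzR)
  have hpow : ‖z‖ ^ 2 * ‖z‖ ^ (-((n : ℝ) + 2 * s)) = ‖z‖ ^ (-((n : ℝ) + 2 * s - 2)) := by
    rw [← Real.rpow_two, ← Real.rpow_add (norm_pos_iff.2 hz0)]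
    ring_nf
  calc ‖g z * k z‖ = |g z| * |k z| := by rw [Real.norm_eq_abs, abs_mul]
    _ ≤ B * ‖z‖ ^ 2 * (κ₂ * ‖z‖ ^ (-((n : ℝ) + 2 * s))) :=
      mul_le_mul (hgB z hzR) hz (abs_nonneg _) hB
    _ = B * κ₂ * ‖z‖ ^ (-((n : ℝ) + 2 * s - 2)) := by rw [← hpow]; ring

theorem setIntegral_setOf_le_norm_secondDiff_mul_le [NeZero n]
    (hk : IsAdmissibleKernel n s κ₁ κ₂ k) (hs : 0 < s) (hκ₁ : 0 ≤ κ₁) {u : Euc n → ℝ}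
    (hu : ∀ y, 0 ≤ u y) (x : Euc n) {R : ℝ} (hR : 0 < R)
    (hint : IntegrableOn (fun z => secondDiff u x z * k z) {z | R ≤ ‖z‖}) :
    ∫ z in {z | R ≤ ‖z‖}, secondDiff u x z * k z ≤
      2 * u x * tailConst n s κ₂ * R ^ (-(2 * s)) := by
  have hp : (Module.finrank ℝ (Euc n) : ℝ) < n + 2 * s := by
    rw [finrank_euclideanSpace_fin]; linarith
  have hbound : ∀ᵐ z ∂volume.restrict {z : Euc n | R ≤ ‖z‖},
      secondDiff u x z * k z ≤ 2 * u x * κ₂ * ‖z‖ ^ (-((n : ℝ) + 2 * s)) := by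
    filter_upwards [ae_restrict_of_ae (hk.nonneg_ae hκ₁), ae_restrict_of_ae (hk.abs_le_ae hκ₁)]
      with z hk0 hkz
    calc secondDiff u x z * k z ≤ 2 * u x * k z :=
          mul_le_mul_of_nonneg_right (secondDiff_le_two_mul hu x z) hk0
      _ ≤ 2 * u x * (κ₂ * ‖z‖ ^ (-((n : ℝ) + 2 * s))) :=
          mul_le_mul_of_nonneg_left ((le_abs_self _).trans hkz) (by linarith [hu x])
      _ = _ := by ring
  calc ∫ z in {z | R ≤ ‖z‖}, secondDiff u x z * k z
      ≤ ∫ z in {z | R ≤ ‖z‖}, 2 * u x * κ₂ * ‖z‖ ^ (-((n : ℝ) + 2 * s)) :=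
        setIntegral_mono_ae_restrict hint
          ((integrableOn_norm_rpow_neg_setOf_le_norm volume hp hR).const_mul _) hbound
    _ = _ := by
        rw [integral_const_mul, setIntegral_norm_rpow_neg_setOf_le_norm volume hp hR,
          finrank_euclideanSpace_fin, show (n : ℝ) - (n + 2 * s) = -(2 * s) by ring,
          show (n : ℝ) + 2 * s - n = 2 * s by ring, tailConst]
        ring

end IsAdmissibleKernel

theorem cosh_sub_one_le_sq_mul_exp (t : ℝ) :
    Real.cosh t - 1 ≤ t ^ 2 / 2 * Real.exp (t ^ 2 / 2) := by
  have h := Real.add_one_le_exp (-(t ^ 2 / 2))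
  have hexp : Real.exp (t ^ 2 / 2) * Real.exp (-(t ^ 2 / 2)) = 1 := by
    rw [← Real.exp_add, add_neg_cancel, Real.exp_zero]
  nlinarith [Real.cosh_le_exp_half_sq t, Real.exp_pos (t ^ 2 / 2)]

theorem exp_div_four_le_cosh_sub_one {t : ℝ} (ht : 4 ≤ Real.exp t) :
    Real.exp t / 4 ≤ Real.cosh t - 1 := by
  rw [Real.cosh_eq]
  linarith [Real.exp_pos (-t)]

theorem abs_apply_le_norm {n : ℕ} (z : Euc n) (i : Fin n) : |z i| ≤ ‖z‖ := by
  simpa using PiLp.norm_apply_le z i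

noncomputable def expCutoff {n : ℕ} (i : Fin n) (lam R : ℝ) (y : Euc n) : ℝ :=
  if ‖y‖ < 2 * R then Real.exp (lam * y i) else 0

section ExpCutoff

variable {n : ℕ} (i : Fin n) {lam R : ℝ}

theorem expCutoff_nonneg (y : Euc n) : 0 ≤ expCutoff i lam R y := by
  unfold expCutoff; split_ifs <;> positivity

theorem expCutoff_le (hlam : 0 ≤ lam) (y : Euc n) :
    expCutoff i lam R y ≤ Real.exp (lam * (2 * R)) := by
  unfold expCutoff
  split_ifs with hy
  · exact Real.exp_le_exp.2 (mul_le_mul_of_nonneg_left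
      ((le_abs_self _).trans ((abs_apply_le_norm y i).trans hy.le)) hlam)
  · positivity

theorem measurable_expCutoff : Measurable (expCutoff i lam R) :=
  Measurable.ite (measurableSet_lt measurable_norm measurable_const) (by fun_prop)
    measurable_const

theorem secondDiff_expCutoff {x z : Euc n} (hx : ‖x‖ < R) (hz : ‖z‖ < R) :
    secondDiff (expCutoff i lam R) x z =
      -(2 * expCutoff i lam R x) * (Real.cosh (lam * z i) - 1) := by
  have h2R (y : Euc n) (hy : ‖y‖ < 2 * R) : expCutoff i lam R y = Real.exp (lam * y i) :=
    if_pos hy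
  rw [secondDiff, h2R x (by linarith [norm_nonneg z]),
    h2R (x + z) ((norm_add_le x z).trans_lt (by linarith)),
    h2R (x - z) ((norm_sub_le x z).trans_lt (by linarith)), Real.cosh_eq]
  simp only [PiLp.add_apply, PiLp.sub_apply, mul_add, mul_sub, Real.exp_add, Real.exp_sub,
    Real.exp_neg]
  field_simp
  ring

theorem cosh_mul_apply_sub_one_le {z : Euc n} (hz : ‖z‖ ≤ R) :
    Real.cosh (lam * z i) - 1 ≤ lam ^ 2 * Real.exp ((lam * R) ^ 2 / 2) / 2 * ‖z‖ ^ 2 := by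
  obtain ⟨hzi₁, hzi₂⟩ := abs_le.1 (abs_apply_le_norm z i)
  have hsq : (lam * z i) ^ 2 ≤ lam ^ 2 * ‖z‖ ^ 2 := by
    rw [mul_pow]; exact mul_le_mul_of_nonneg_left (sq_le_sq' hzi₁ hzi₂) (sq_nonneg lam)
  have hsqR : (lam * z i) ^ 2 ≤ (lam * R) ^ 2 := hsq.trans (by rw [mul_pow]; gcongr)
  calc Real.cosh (lam * z i) - 1
      ≤ (lam * z i) ^ 2 / 2 * Real.exp ((lam * z i) ^ 2 / 2) := cosh_sub_one_le_sq_mul_exp _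
    _ ≤ lam ^ 2 * ‖z‖ ^ 2 / 2 * Real.exp ((lam * R) ^ 2 / 2) := by
      gcongr
    _ = _ := by ring

theorem ball_cap_subset (hR : 0 < R) :
    ball ((3 * R / 4) • EuclideanSpace.single i (1 : ℝ)) (R / 8) ⊆
      ball 0 R ∩ {z | R / 2 ≤ z i} := by
  intro z hz
  have hc : ‖(3 * R / 4) • EuclideanSpace.single i (1 : ℝ)‖ = 3 * R / 4 := by
    rw [norm_smul, PiLp.norm_single, norm_one, mul_one, Real.norm_eq_abs,
      abs_of_pos (by positivity)]
  have hz' := mem_ball_iff_norm.1 hz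
  refine ⟨mem_ball_zero_iff.2 ?_, ?_⟩
  · calc ‖z‖ ≤ ‖z - (3 * R / 4) • EuclideanSpace.single i (1 : ℝ)‖ +
          ‖(3 * R / 4) • EuclideanSpace.single i (1 : ℝ)‖ := norm_le_norm_sub_add _ _
      _ < R := by rw [hc]; linarith
  · have h := abs_apply_le_norm (z - (3 * R / 4) • EuclideanSpace.single i (1 : ℝ)) i
    simp only [PiLp.sub_apply, PiLp.smul_apply, PiLp.single_apply, if_true,
      smul_eq_mul, mul_one] at h
    show R / 2 ≤ z i
    linarith [abs_le.1 (h.trans hz'.le)]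

theorem le_cosh_sub_one_mul_of_mem_ball {s κ₁ κ : ℝ} (hs : 0 ≤ s) (hκ₁ : 0 ≤ κ₁)
    (hlam : 0 ≤ lam) (hR : 0 < R) (hE : 4 ≤ Real.exp (lam * R / 2)) {z : Euc n}
    (hz : z ∈ ball ((3 * R / 4) • EuclideanSpace.single i (1 : ℝ)) (R / 8))
    (hκ : κ₁ / ‖z‖ ^ ((n : ℝ) + 2 * s) ≤ κ) :
    Real.exp (lam * R / 2) / 4 * (κ₁ / R ^ ((n : ℝ) + 2 * s)) ≤
      (Real.cosh (lam * z i) - 1) * κ := by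
  obtain ⟨hzR, hzi⟩ := ball_cap_subset i hR hz
  have hzR : ‖z‖ < R := mem_ball_zero_iff.1 hzR
  have hz0 : 0 < ‖z‖ := by linarith [(le_abs_self _).trans (abs_apply_le_norm z i), hzi.out]
  have hexp : Real.exp (lam * R / 2) ≤ Real.exp (lam * z i) :=
    Real.exp_le_exp.2 (by nlinarith [hzi.out])
  have hcosh := (div_le_div_of_nonneg_right hexp (by norm_num : (0 : ℝ) ≤ 4)).trans
    (exp_div_four_le_cosh_sub_one (hE.trans hexp))
  have hκ' : κ₁ / R ^ ((n : ℝ) + 2 * s) ≤ κ :=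
    (div_le_div_of_nonneg_left hκ₁ (Real.rpow_pos_of_pos hz0 _)
      (Real.rpow_le_rpow (norm_nonneg z) hzR.le (by positivity))).trans hκ
  exact mul_le_mul hcosh hκ' (by positivity) ((by positivity : (0 : ℝ) ≤ _).trans hcosh)

end ExpCutoff

namespace IsAdmissibleKernel

variable {n : ℕ} [NeZero n] {s κ₁ κ₂ : ℝ} {k : Euc n → ℝ} (i : Fin n) {lam R : ℝ}

theorem integrableOn_ball_cosh_mul (hk : IsAdmissibleKernel n s κ₁ κ₂ k) (hs : s < 1)
    (hκ₁ : 0 ≤ κ₁) (R : ℝ) :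
    IntegrableOn (fun z => (Real.cosh (lam * z i) - 1) * k z) (ball 0 R) := by
  refine hk.integrableOn_ball_mul hs hκ₁ (B := lam ^ 2 * Real.exp ((lam * R) ^ 2 / 2) / 2)
    (g := fun z => Real.cosh (lam * z i) - 1) (by fun_prop) fun z hz => ?_
  rw [abs_of_nonneg (sub_nonneg.2 (Real.one_le_cosh _))]
  exact cosh_mul_apply_sub_one_le i (mem_ball_zero_iff.1 hz).le

theorem integrable_secondDiff_expCutoff_mul (hk : IsAdmissibleKernel n s κ₁ κ₂ k)
    (hs : s ∈ Ioo 0 1) (hκ₁ : 0 ≤ κ₁) (hlam : 0 ≤ lam) (hR : 0 < R) {x : Euc n}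
    (hx : ‖x‖ < R) : Integrable fun z => secondDiff (expCutoff i lam R) x z * k z := by
  have hball : IntegrableOn (fun z => secondDiff (expCutoff i lam R) x z * k z) (ball 0 R) :=
    IntegrableOn.congr_fun ((hk.integrableOn_ball_cosh_mul i (lam := lam) hs.2 hκ₁ R).const_mul
      (-(2 * expCutoff i lam R x)))
      (fun z hz => by rw [secondDiff_expCutoff i hx (mem_ball_zero_iff.1 hz), mul_assoc])
      measurableSet_ball
  have hmeas : Measurable (secondDiff (expCutoff i lam R) x) := by
    have := measurable_expCutoff i (lam := lam) (R := R)
    unfold secondDiff; fun_prop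
  have htail := hk.integrableOn_mul_setOf_le_norm hs.1 hκ₁ hmeas.aestronglyMeasurable
    (abs_secondDiff_le (expCutoff_nonneg i) (expCutoff_le i hlam) x) hR
  rw [setOf_le_norm_eq_compl_ball] at htail
  simpa only [union_compl_self, integrableOn_univ] using hball.union htail

theorem le_setIntegral_ball_cosh_mul (hk : IsAdmissibleKernel n s κ₁ κ₂ k) (hs : s ∈ Ioo 0 1)
    (hκ₁ : 0 ≤ κ₁) (hlam : 0 ≤ lam) (hR : 0 < R) (hE : 4 ≤ Real.exp (lam * R / 2)) :
    capConst n κ₁ * Real.exp (lam * R / 2) * R ^ (-(2 * s)) ≤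
      ∫ z in ball 0 R, (Real.cosh (lam * z i) - 1) * k z := by
  have hcap := (ball_cap_subset i hR).trans inter_subset_left
  have hint := hk.integrableOn_ball_cosh_mul i (lam := lam) hs.2 hκ₁ R
  have hpt : ∀ᵐ z, z ∈ ball ((3 * R / 4) • EuclideanSpace.single i (1 : ℝ)) (R / 8) →
      Real.exp (lam * R / 2) / 4 * (κ₁ / R ^ ((n : ℝ) + 2 * s)) ≤
        (Real.cosh (lam * z i) - 1) * k z := by
    filter_upwards [hk.2.2] with z hkz hz
    exact le_cosh_sub_one_mul_of_mem_ball i hs.1.le hκ₁ hlam hR hE hz hkz.1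
  have hnonneg : ∀ᵐ z ∂volume.restrict (ball (0 : Euc n) R),
      0 ≤ (Real.cosh (lam * z i) - 1) * k z := by
    filter_upwards [ae_restrict_of_ae (hk.nonneg_ae hκ₁)] with z hz
    exact mul_nonneg (sub_nonneg.2 (Real.one_le_cosh _)) hz
  calc capConst n κ₁ * Real.exp (lam * R / 2) * R ^ (-(2 * s))
      = ∫ _ in ball ((3 * R / 4) • EuclideanSpace.single i (1 : ℝ)) (R / 8),
          Real.exp (lam * R / 2) / 4 * (κ₁ / R ^ ((n : ℝ) + 2 * s)) := by
        rw [capConst, setIntegral_const,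
          Measure.addHaar_real_ball_of_pos _ ((3 * R / 4) • _) (by positivity),
          finrank_euclideanSpace_fin, smul_eq_mul, Real.rpow_add hR, Real.rpow_natCast,
          Real.rpow_neg hR.le, div_pow]
        field_simp
    _ ≤ ∫ z in ball ((3 * R / 4) • EuclideanSpace.single i (1 : ℝ)) (R / 8),
          (Real.cosh (lam * z i) - 1) * k z :=
        setIntegral_mono_on_ae integrableOn_const (hint.mono_set hcap) measurableSet_ball hpt
    _ ≤ ∫ z in ball 0 R, (Real.cosh (lam * z i) - 1) * k z :=
        setIntegral_mono_set hint hnonneg hcap.eventuallyLE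

theorem integral_secondDiff_expCutoff_mul_le (hk : IsAdmissibleKernel n s κ₁ κ₂ k)
    (hs : s ∈ Ioo 0 1) (hκ₁ : 0 ≤ κ₁) (hlam : 0 ≤ lam) (hR : 0 < R) {x : Euc n}
    (hx : ‖x‖ < R) (hE : 4 ≤ Real.exp (lam * R / 2)) :
    ∫ z, secondDiff (expCutoff i lam R) x z * k z ≤
      2 * expCutoff i lam R x * R ^ (-(2 * s)) *
        (tailConst n s κ₂ - capConst n κ₁ * Real.exp (lam * R / 2)) := by
  have hint := hk.integrable_secondDiff_expCutoff_mul i hs hκ₁ hlam hR hx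
  have hball : ∫ z in ball 0 R, secondDiff (expCutoff i lam R) x z * k z =
      -(2 * expCutoff i lam R x) * ∫ z in ball 0 R, (Real.cosh (lam * z i) - 1) * k z := by
    rw [← integral_const_mul]
    refine setIntegral_congr_fun measurableSet_ball fun z hz => ?_
    rw [secondDiff_expCutoff i hx (mem_ball_zero_iff.1 hz), mul_assoc]
  have hcap := mul_le_mul_of_nonneg_left (hk.le_setIntegral_ball_cosh_mul i hs hκ₁ hlam hR hE)
    (by linarith [expCutoff_nonneg i (lam := lam) (R := R) x] : 0 ≤ 2 * expCutoff i lam R x)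
  have htail := hk.setIntegral_setOf_le_norm_secondDiff_mul_le hs.1 hκ₁ (expCutoff_nonneg i) x hR
    hint.integrableOn
  rw [← integral_add_compl measurableSet_ball hint, ← setOf_le_norm_eq_compl_ball, hball]
  linarith

theorem lkHas_expCutoff (hk : IsAdmissibleKernel n s κ₁ κ₂ k) (hs : s ∈ Ioo 0 1)
    (hκ₁ : 0 ≤ κ₁) (hlam : 0 ≤ lam) (hR : 0 < R) {x : Euc n} (hx : ‖x‖ < R) :
    LkHas k (expCutoff i lam R) x
      ((1 / 2) * ∫ z, secondDiff (expCutoff i lam R) x z * k z) := by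
  have hmeas := measurable_expCutoff i (lam := lam) (R := R)
  refine lkHas_half_integral_secondDiff hk.2.1 (fun ε hε => ?_)
    (hk.integrable_secondDiff_expCutoff_mul i hs hκ₁ hlam hR hx)
  refine hk.integrableOn_mul_setOf_le_norm hs.1 hκ₁
    (by fun_prop : Measurable fun z =>
      expCutoff i lam R x - expCutoff i lam R (x + z)).aestronglyMeasurable
    (fun z => abs_sub_le_of_nonneg_of_le (expCutoff_nonneg i x) (expCutoff_le i hlam x)
      (expCutoff_nonneg i (x + z)) (expCutoff_le i hlam (x + z))) hε

theorem half_integral_secondDiff_expCutoff_mul_le (hk : IsAdmissibleKernel n s κ₁ κ₂ k)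
    (hs : s ∈ Ioo 0 1) (hκ₁ : 0 < κ₁) (hlam : 0 ≤ lam) (hR : 0 < R) {x : Euc n}
    (hx : ‖x‖ < R) (hE : max 4 (2 * tailConst n s κ₂ / capConst n κ₁) ≤ Real.exp (lam * R / 2)) :
    (1 / 2) * ∫ z, secondDiff (expCutoff i lam R) x z * k z ≤
      -(capConst n κ₁ / 2 * Real.exp (lam * R / 2) * R ^ (-(2 * s)) * expCutoff i lam R x) := by
  have hbound := hk.integral_secondDiff_expCutoff_mul_le i hs hκ₁.le hlam hR hx
    ((le_max_left _ _).trans hE)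
  have hA : 2 * tailConst n s κ₂ ≤ capConst n κ₁ * Real.exp (lam * R / 2) := by
    rw [← div_le_iff₀' (capConst_pos hκ₁)]
    exact (le_max_right _ _).trans hE
  have hvρ : 0 ≤ expCutoff i lam R x * R ^ (-(2 * s)) :=
    mul_nonneg (expCutoff_nonneg i x) (Real.rpow_nonneg hR.le _)
  nlinarith [mul_le_mul_of_nonneg_left hA hvρ]

end IsAdmissibleKernel

theorem neg_mul_rpow_neg_le_neg_div {c C lam R s E v : ℝ} (hlam : 0 < lam) (hR : 0 < R)
    (hC : 0 < C) (hcC : 2 ≤ c * C) (hlamR : 1 ≤ lam * R) (hE : 0 ≤ E) (hv : 0 ≤ v) :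
    -(c / 2 * E * R ^ (-(2 * s)) * v) ≤ -(1 / C) * (E / (lam * R ^ (1 + 2 * s))) * v := by
  have hρ : 0 < R ^ (2 * s) := Real.rpow_pos_of_pos hR _
  have hCR : 1 / (C * (lam * R)) ≤ c / 2 := by
    rw [div_le_div_iff₀ (by positivity) two_pos]
    nlinarith
  calc -(c / 2 * E * R ^ (-(2 * s)) * v)
      ≤ -(1 / (C * (lam * R)) * (E * (R ^ (2 * s))⁻¹ * v)) := by
        rw [Real.rpow_neg hR.le]
        linarith [mul_le_mul_of_nonneg_right hCR (by positivity : 0 ≤ E * (R ^ (2 * s))⁻¹ * v)]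
    _ = _ := by
        rw [Real.rpow_add hR, Real.rpow_one]
        field_simp

theorem kernel_barrier_lemma_general
    (n : ℕ) (hn : 0 < n) (s κ₁ κ₂ : ℝ)
    (hs : s ∈ Set.Ioo (0 : ℝ) 1) (hκ₁ : 0 < κ₁) :
    ∃ C : ℝ, 1 ≤ C ∧ ∀ k : Euc n → ℝ, IsAdmissibleKernel n s κ₁ κ₂ k →
      ∀ lam R : ℝ, 0 < lam → 0 < R → C ≤ lam * R →
      ∀ v : Euc n → ℝ,
        (∀ y, v y = if ‖y‖ < 2 * R then Real.exp (lam * y ⟨0, hn⟩) else 0) →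
      ∀ x ∈ ball (0 : Euc n) R,
        LkExistsAt k v x ∧
          Lk k v x ≤ -(1 / C) * (Real.exp (lam * R / 2) / (lam * R ^ (1 + 2 * s))) * v x := by
  have : NeZero n := ⟨hn.ne'⟩
  set c := capConst n κ₁
  set M := max 4 (2 * tailConst n s κ₂ / c)
  have hc : 0 < c := capConst_pos hκ₁
  -- `λR ≥ 2 log M` gives `e^{λR/2} ≥ M`, and `c C ≥ 2` absorbs the factor `1 / (C λR)`.
  refine ⟨max 1 (max (2 / c) (2 * Real.log M)), le_max_left _ _, ?_⟩
  rintro k hk lam R hlam hR hC v hv x hx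
  obtain rfl : v = expCutoff ⟨0, hn⟩ lam R := funext hv
  have hx' := mem_ball_zero_iff.1 hx
  have hE : M ≤ Real.exp (lam * R / 2) := by
    rw [← Real.log_le_iff_le_exp (by positivity)]
    linarith [le_max_right (2 / c) (2 * Real.log M), le_max_right 1 (max (2 / c) (2 * Real.log M))]
  have hL := hk.lkHas_expCutoff ⟨0, hn⟩ hs hκ₁.le hlam.le hR hx'
  refine ⟨⟨_, hL⟩, ?_⟩
  rw [Lk, hL.limUnder_eq]
  refine (hk.half_integral_secondDiff_expCutoff_mul_le _ hs hκ₁ hlam.le hR hx' hE).trans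
    (neg_mul_rpow_neg_le_neg_div hlam hR (by positivity) ?_ ((le_max_left _ _).trans hC)
      (Real.exp_pos _).le (expCutoff_nonneg _ x))
  rw [← div_le_iff₀' hc]
  exact (le_max_left _ _).trans (le_max_right _ _)

/-- The auxiliary barrier `v = e^{λ x₁} χ_{B_{2R}}` satisfies
`L_k v ≤ -C⁻¹ e^{λR/2} (λ R^{1+2s})⁻¹ v` in `B_R`, provided `λR` is large enough. -/
theorem kernel_barrier_lemma
    (n : ℕ) (hn : 0 < n) (s κ₁ κ₂ : ℝ)
    (hs : s ∈ Set.Ioo (0 : ℝ) 1) (hκ₁ : 0 < κ₁) (hκ : κ₁ ≤ κ₂) :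
    ∃ C : ℝ, 1 ≤ C ∧ ∀ k : Euc n → ℝ, IsAdmissibleKernel n s κ₁ κ₂ k →
      ∀ lam R : ℝ, 0 < lam → 0 < R → C ≤ lam * R →
      ∀ v : Euc n → ℝ,
        (∀ y, v y = if ‖y‖ < 2 * R then Real.exp (lam * y ⟨0, hn⟩) else 0) →
      ∀ x ∈ ball (0 : Euc n) R,
        LkExistsAt k v x ∧
          Lk k v x ≤ -(1 / C) * (Real.exp (lam * R / 2) / (lam * R ^ (1 + 2 * s))) * v x :=
  kernel_barrier_lemma_general n hn s κ₁ κ₂ hs hκ₁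
end

section
/- Let Ω ⊂ ℝⁿ be a bounded open set with Lipschitz boundary and k be an admissible kernel with parameters (s, κ₁, κ₂), s ∈ (0, 1/2), κ₂ ≥ κ₁ > 0. Let u ∈ C^{0,1}(Ω) ∩ C⁰(ℝⁿ) with u = 0 in ℝⁿ∖Ω. Then L_k u ∈ C^{1−2s}(Ω) and ‖L_k u‖_{C^{1−2s}(Ω)} ≤ C ‖Du‖_{L^∞(Ω)}, for some constant C > 0 depending only on n, s, κ₂, and diam(Ω). -/
open Filter MeasureTheory Metric Set
open scoped Topology NNReal ENNReal

/-!
For `s < 1/2` the integrand `(u x - u (x + z)) k z` is absolutely integrable: it is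
`O(M |z| ^ (1 - n - 2s))` near `0` and `O(M diam Ω |z| ^ (-n - 2s))` at infinity, so the principal
value is an ordinary Lebesgue integral, bounded by `C M`. For the Hölder bound, the difference of
the integrands at `x` and `y` is at most `2 M |z|` and at most `2 M |x - y|`; splitting the
integral at `|z| = |x - y|` and rescaling both pieces produces `|x - y| ^ (1 - 2s)`.
The Lipschitz bound holds on all of `ℝⁿ`, not only in `Ω`: on a segment from a point of `Ω` to a
point outside, `u` vanishes where the segment leaves `Ω`.
-/

open Module
open scoped Pointwise

section Lipschitz

variable {E : Type*} [NormedAddCommGroup E] [NormedSpace ℝ E] {Ω : Set E} {u : E → ℝ} {M : ℝ}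

theorem exists_mem_segment_closure_inter_closure_compl {a b : E} (ha : a ∈ Ω) (hb : b ∉ Ω) :
    ∃ z ∈ segment ℝ a b, z ∈ closure Ω ∧ z ∈ closure Ωᶜ :=
  isPreconnected_closed_iff.1 (convex_segment a b).isPreconnected _ _ isClosed_closure
    isClosed_closure (fun z _ => (em (z ∈ Ω)).imp (subset_closure ·) (subset_closure ·))
    ⟨a, left_mem_segment ℝ a b, subset_closure ha⟩ ⟨b, right_mem_segment ℝ a b, subset_closure hb⟩

/-- Where the segment from `a` to `b` leaves `Ω`, `u` vanishes, and up to there the Lipschitz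
bound inside `Ω` still applies. -/
theorem exists_abs_sub_le_of_mem_of_notMem (hu : Continuous u) (hu0 : ∀ x ∉ Ω, u x = 0)
    (hlip : ∀ x ∈ Ω, ∀ y ∈ Ω, |u x - u y| ≤ M * ‖x - y‖) {a b : E} (ha : a ∈ Ω) (hb : b ∉ Ω) :
    ∃ z ∈ closure Ω, ‖a - z‖ ≤ ‖a - b‖ ∧ |u a - u b| ≤ M * ‖a - z‖ := by
  obtain ⟨z, hz, hzΩ, hzΩc⟩ := exists_mem_segment_closure_inter_closure_compl ha hb
  have huz : u z = 0 :=
    closure_minimal (fun x hx => hu0 x hx) (isClosed_eq hu continuous_const) hzΩc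
  have hlip_az : |u a - u z| ≤ M * ‖a - z‖ :=
    closure_minimal (t := {z | |u a - u z| ≤ M * ‖a - z‖}) (hlip a ha)
      (isClosed_le (by fun_prop) (by fun_prop)) hzΩ
  refine ⟨z, hzΩ, ?_, by rwa [hu0 b hb, ← huz]⟩
  rw [norm_sub_rev a z, norm_sub_rev a b]
  exact norm_sub_le_of_mem_segment hz

theorem abs_sub_le_of_lipschitzOn_of_eq_zero (hM : 0 ≤ M) (hu : Continuous u)
    (hu0 : ∀ x ∉ Ω, u x = 0) (hlip : ∀ x ∈ Ω, ∀ y ∈ Ω, |u x - u y| ≤ M * ‖x - y‖) (a b : E) :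
    |u a - u b| ≤ M * ‖a - b‖ := by
  have key : ∀ a ∈ Ω, ∀ b ∉ Ω, |u a - u b| ≤ M * ‖a - b‖ := fun a ha b hb => by
    obtain ⟨z, -, hza, hab⟩ := exists_abs_sub_le_of_mem_of_notMem hu hu0 hlip ha hb
    exact hab.trans (mul_le_mul_of_nonneg_left hza hM)
  by_cases ha : a ∈ Ω <;> by_cases hb : b ∈ Ω
  · exact hlip a ha b hb
  · exact key a ha b hb
  · rw [abs_sub_comm, norm_sub_rev]; exact key b hb a ha
  · rw [hu0 a ha, hu0 b hb, sub_self, abs_zero]; positivity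

theorem abs_sub_le_mul_diam (hM : 0 ≤ M) (hΩ : Bornology.IsBounded Ω) (hu : Continuous u)
    (hu0 : ∀ x ∉ Ω, u x = 0) (hlip : ∀ x ∈ Ω, ∀ y ∈ Ω, |u x - u y| ≤ M * ‖x - y‖)
    {a : E} (ha : a ∈ Ω) (b : E) : |u a - u b| ≤ M * diam Ω := by
  by_cases hb : b ∈ Ω
  · exact (hlip a ha b hb).trans (mul_le_mul_of_nonneg_left
      (dist_eq_norm a b ▸ dist_le_diam_of_mem hΩ ha hb) hM)
  · obtain ⟨z, hz, -, hab⟩ := exists_abs_sub_le_of_mem_of_notMem hu hu0 hlip ha hb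
    refine hab.trans (mul_le_mul_of_nonneg_left ?_ hM)
    rw [← dist_eq_norm, ← diam_closure]
    exact dist_le_diam_of_mem hΩ.closure (subset_closure ha) hz

end Lipschitz

section KernelIntegrals

variable {E : Type*} [NormedAddCommGroup E]

theorem abs_mul_le_indicator_ball_add_indicator_compl {γ κ a b ρ w k : ℝ} (hγ : γ ≠ 1) {z : E}
    (hk : |k| ≤ κ * ‖z‖ ^ (-γ)) (hwa : |w| ≤ a * ‖z‖) (hwb : |w| ≤ b) :
    |w * k| ≤ κ * ((ball 0 ρ).indicator (fun z => a * ‖z‖ ^ (1 - γ)) z +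
      (ball 0 ρ)ᶜ.indicator (fun z => b * ‖z‖ ^ (-γ)) z) := by
  rw [abs_mul]
  by_cases hzρ : z ∈ ball 0 ρ
  · rw [indicator_of_mem hzρ, indicator_of_notMem (not_not_intro hzρ : z ∉ (ball 0 ρ)ᶜ),
      add_zero]
    calc |w| * |k| ≤ a * ‖z‖ * (κ * ‖z‖ ^ (-γ)) :=
          mul_le_mul hwa hk (abs_nonneg _) ((abs_nonneg _).trans hwa)
      _ = κ * (a * ‖z‖ ^ (1 - γ)) := by
          rw [sub_eq_add_neg, Real.rpow_one_add' (norm_nonneg z) (by contrapose! hγ; linarith)]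
          ring
  · rw [indicator_of_notMem hzρ, indicator_of_mem (mem_compl hzρ), zero_add]
    calc |w| * |k| ≤ b * (κ * ‖z‖ ^ (-γ)) :=
          mul_le_mul hwb hk (abs_nonneg _) ((abs_nonneg _).trans hwb)
      _ = κ * (b * ‖z‖ ^ (-γ)) := by ring

variable [NormedSpace ℝ E]

theorem smul_compl_ball_zero_one {R : ℝ} (hR : 0 < R) : R • (ball (0 : E) 1)ᶜ = (ball 0 R)ᶜ := by
  rw [compl_eq_univ_sdiff, smul_set_sdiff₀ hR.ne', smul_set_univ₀ hR.ne', smul_unitBall_of_pos hR,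
    ← compl_eq_univ_sdiff]

variable [FiniteDimensional ℝ E] [MeasurableSpace E] [BorelSpace E] (μ : Measure E)
  [μ.IsAddHaarMeasure]

theorem integrableOn_ball_norm_rpow {p : ℝ} (hp : -(finrank ℝ E : ℝ) < p) (r : ℝ) :
    IntegrableOn (fun z : E => ‖z‖ ^ p) (ball 0 r) μ := by
  rcases le_or_gt 0 p with hp0 | hp0
  · exact ((continuous_norm.rpow_const fun _ => Or.inr hp0).continuousOn.integrableOn_compact
      (isCompact_closedBall 0 r)).mono_set ball_subset_closedBall
  · have hd : 1 ≤ finrank ℝ E := by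
      by_contra! h
      simp only [Nat.lt_one_iff.1 h, CharP.cast_eq_zero] at hp
      linarith
    refine integrableOn_ball_of_norm_le_rpow (C := 1) (α := -p) hd (by linarith) ?_
      (by fun_prop : Measurable fun z : E => ‖z‖ ^ p).aestronglyMeasurable
    filter_upwards with z
    rw [neg_neg, one_mul, Real.norm_of_nonneg (by positivity)]

theorem integrableOn_compl_ball_norm_rpow {q r : ℝ} (hq : q < -(finrank ℝ E : ℝ)) (hr : 0 < r) :
    IntegrableOn (fun z : E => ‖z‖ ^ q) (ball 0 r)ᶜ μ := by
  have hint := (integrable_one_add_norm (μ := μ) (r := -q) (by linarith)).const_mul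
    ((1 + r⁻¹) ^ (-q))
  refine hint.integrableOn.mono'
    (by fun_prop : Measurable fun z : E => ‖z‖ ^ q).aestronglyMeasurable
    ((ae_restrict_iff' measurableSet_ball.compl).2 (.of_forall fun z hz => ?_))
  have hzr : r ≤ ‖z‖ := by simpa using hz
  have hz0 : 0 < ‖z‖ := hr.trans_le hzr
  have hc : 0 < 1 + r⁻¹ := by positivity
  have h1 : 1 + ‖z‖ ≤ (1 + r⁻¹) * ‖z‖ := by
    have : 1 ≤ r⁻¹ * ‖z‖ := by rw [inv_mul_eq_div, one_le_div hr]; exact hzr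
    linarith
  calc ‖‖z‖ ^ q‖ = (1 + r⁻¹) ^ (-q) * ((1 + r⁻¹) * ‖z‖) ^ q := by
        rw [Real.norm_of_nonneg (by positivity), Real.mul_rpow hc.le hz0.le, ← mul_assoc,
          ← Real.rpow_add hc, neg_add_cancel, Real.rpow_zero, one_mul]
    _ ≤ (1 + r⁻¹) ^ (-q) * (1 + ‖z‖) ^ (-(-q)) := by
        rw [neg_neg]
        have hq0 : q ≤ 0 := by have := (finrank ℝ E).cast_nonneg (α := ℝ); linarith
        exact mul_le_mul_of_nonneg_left (Real.rpow_le_rpow_of_nonpos (by positivity) h1 hq0)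
          (by positivity)

theorem setIntegral_smul_set_norm_rpow (p : ℝ) (s : Set E) {R : ℝ} (hR : 0 < R) :
    ∫ z in R • s, ‖z‖ ^ p ∂μ = R ^ (finrank ℝ E + p) * ∫ z in s, ‖z‖ ^ p ∂μ := by
  have h := Measure.setIntegral_comp_smul_of_pos μ (fun z : E => ‖z‖ ^ p) s hR
  simp only [norm_smul, Real.norm_of_nonneg hR.le, Real.mul_rpow hR.le (norm_nonneg _),
    integral_const_mul, smul_eq_mul] at h
  rw [Real.rpow_add hR, Real.rpow_natCast, mul_assoc, h]
  field_simp

theorem setIntegral_ball_norm_rpow (p : ℝ) {ρ : ℝ} (hρ : 0 < ρ) :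
    ∫ z in ball 0 ρ, ‖z‖ ^ p ∂μ = ρ ^ (finrank ℝ E + p) * ∫ z in ball 0 1, ‖z‖ ^ p ∂μ := by
  rw [← smul_unitBall_of_pos hρ, setIntegral_smul_set_norm_rpow μ p _ hρ]

theorem setIntegral_compl_ball_norm_rpow (p : ℝ) {ρ : ℝ} (hρ : 0 < ρ) :
    ∫ z in (ball 0 ρ)ᶜ, ‖z‖ ^ p ∂μ = ρ ^ (finrank ℝ E + p) * ∫ z in (ball 0 1)ᶜ, ‖z‖ ^ p ∂μ := by
  rw [← smul_compl_ball_zero_one hρ, setIntegral_smul_set_norm_rpow μ p _ hρ]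

theorem integrable_mul_and_abs_integral_mul_le {γ κ a b ρ : ℝ}
    (hγ : (finrank ℝ E : ℝ) < γ) (hγ1 : γ < finrank ℝ E + 1) {k w : E → ℝ}
    (hk : AEStronglyMeasurable k μ) (hkb : ∀ᵐ z ∂μ, |k z| ≤ κ * ‖z‖ ^ (-γ))
    (hw : AEStronglyMeasurable w μ) (hwa : ∀ z, |w z| ≤ a * ‖z‖) (hwb : ∀ z, |w z| ≤ b)
    (hρ : 0 < ρ) :
    Integrable (fun z => w z * k z) μ ∧
      |∫ z, w z * k z ∂μ| ≤
        κ * (a * ρ ^ (finrank ℝ E + 1 - γ) * ∫ z in ball 0 1, ‖z‖ ^ (1 - γ) ∂μ +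
          b * ρ ^ (finrank ℝ E - γ) * ∫ z in (ball 0 1)ᶜ, ‖z‖ ^ (-γ) ∂μ) := by
  have hγ_ne : γ ≠ 1 := by
    rintro rfl
    have hd : finrank ℝ E < 1 := by exact_mod_cast hγ
    simp only [Nat.lt_one_iff.1 hd, CharP.cast_eq_zero] at hγ1
    linarith
  have hnear : Integrable ((ball 0 ρ).indicator fun z => a * ‖z‖ ^ (1 - γ)) μ :=
    IntegrableOn.integrable_indicator
      ((integrableOn_ball_norm_rpow μ (by linarith) ρ).const_mul a) measurableSet_ball
  have hfar : Integrable ((ball 0 ρ)ᶜ.indicator fun z => b * ‖z‖ ^ (-γ)) μ :=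
    IntegrableOn.integrable_indicator
      ((integrableOn_compl_ball_norm_rpow μ (by linarith) hρ).const_mul b)
      measurableSet_ball.compl
  have hG := (hnear.add hfar).const_mul κ
  have hle : ∀ᵐ z ∂μ, ‖w z * k z‖ ≤ κ * ((ball 0 ρ).indicator (fun z => a * ‖z‖ ^ (1 - γ)) z +
      (ball 0 ρ)ᶜ.indicator (fun z => b * ‖z‖ ^ (-γ)) z) := by
    filter_upwards [hkb] with z hz
    exact abs_mul_le_indicator_ball_add_indicator_compl hγ_ne hz (hwa z) (hwb z)
  refine ⟨hG.mono' (hw.mul hk) hle, (norm_integral_le_of_norm_le hG hle).trans_eq ?_⟩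
  rw [integral_const_mul, integral_add' hnear hfar, integral_indicator measurableSet_ball,
    integral_indicator measurableSet_ball.compl, integral_const_mul, integral_const_mul,
    setIntegral_ball_norm_rpow μ _ hρ, setIntegral_compl_ball_norm_rpow μ _ hρ, add_sub_assoc,
    sub_eq_add_neg (finrank ℝ E : ℝ)]
  ring

theorem integrable_and_abs_integral_sub_mul_le {γ κ M D : ℝ}
    (hγ : (finrank ℝ E : ℝ) < γ) (hγ1 : γ < finrank ℝ E + 1) {k u : E → ℝ}
    (hk : AEStronglyMeasurable k μ) (hkb : ∀ᵐ z ∂μ, |k z| ≤ κ * ‖z‖ ^ (-γ))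
    (hu : Continuous u) (hlip : ∀ a b, |u a - u b| ≤ M * ‖a - b‖) {x : E}
    (hosc : ∀ b, |u x - u b| ≤ M * D) :
    Integrable (fun z => (u x - u (x + z)) * k z) μ ∧
      |∫ z, (u x - u (x + z)) * k z ∂μ| ≤
        κ * M * ((∫ z in ball 0 1, ‖z‖ ^ (1 - γ) ∂μ) + D * ∫ z in (ball 0 1)ᶜ, ‖z‖ ^ (-γ) ∂μ) := by
  obtain ⟨hint, hle⟩ := integrable_mul_and_abs_integral_mul_le μ hγ hγ1 hk hkb
    (by fun_prop : Continuous fun z => u x - u (x + z)).aestronglyMeasurable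
    (fun z => by simpa using hlip x (x + z)) (fun z => hosc (x + z)) one_pos
  refine ⟨hint, hle.trans_eq ?_⟩
  simp only [Real.one_rpow]
  ring

theorem abs_integral_sub_mul_sub_le {γ κ M : ℝ}
    (hγ : (finrank ℝ E : ℝ) < γ) (hγ1 : γ < finrank ℝ E + 1) {k u : E → ℝ}
    (hk : AEStronglyMeasurable k μ) (hkb : ∀ᵐ z ∂μ, |k z| ≤ κ * ‖z‖ ^ (-γ))
    (hu : Continuous u) (hlip : ∀ a b, |u a - u b| ≤ M * ‖a - b‖) {x y : E}
    (hx : Integrable (fun z => (u x - u (x + z)) * k z) μ)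
    (hy : Integrable (fun z => (u y - u (y + z)) * k z) μ) :
    |∫ z, (u x - u (x + z)) * k z ∂μ - ∫ z, (u y - u (y + z)) * k z ∂μ| ≤
      2 * κ * M * ((∫ z in ball 0 1, ‖z‖ ^ (1 - γ) ∂μ) + ∫ z in (ball 0 1)ᶜ, ‖z‖ ^ (-γ) ∂μ) *
        ‖x - y‖ ^ (finrank ℝ E + 1 - γ) := by
  rcases eq_or_ne x y with rfl | hxy
  · rw [sub_self, abs_zero, sub_self, norm_zero, Real.zero_rpow (by linarith), mul_zero]
  set ρ := ‖x - y‖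
  have hρ : 0 < ρ := norm_pos_iff.2 (sub_ne_zero.2 hxy)
  have hw : ∀ z, |(u x - u (x + z)) - (u y - u (y + z))| ≤ 2 * M * ‖z‖ := fun z => by
    have h1 := hlip x (x + z)
    have h2 := hlip y (y + z)
    simp only [sub_add_cancel_left, norm_neg] at h1 h2
    linarith [abs_sub (u x - u (x + z)) (u y - u (y + z))]
  have hw' : ∀ z, |(u x - u (x + z)) - (u y - u (y + z))| ≤ 2 * M * ρ := fun z => by
    have h := hlip (x + z) (y + z)
    rw [add_sub_add_right_eq_sub] at h
    calc |(u x - u (x + z)) - (u y - u (y + z))| = |(u x - u y) - (u (x + z) - u (y + z))| := by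
          ring_nf
      _ ≤ |u x - u y| + |u (x + z) - u (y + z)| := abs_sub _ _
      _ ≤ 2 * M * ρ := by linarith [hlip x y]
  obtain ⟨-, hle⟩ := integrable_mul_and_abs_integral_mul_le μ hγ hγ1 hk hkb
    (by fun_prop : Continuous fun z => (u x - u (x + z)) - (u y - u (y + z))).aestronglyMeasurable
    hw hw' hρ
  rw [← integral_sub hx hy]
  simp only [← sub_mul] at hle ⊢
  refine hle.trans_eq ?_
  rw [show (finrank ℝ E : ℝ) + 1 - γ = finrank ℝ E - γ + 1 by ring, Real.rpow_add_one hρ.ne']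
  ring

end KernelIntegrals

theorem tendsto_setIntegral_le_norm_nhdsGT_zero {E : Type*} [NormedAddCommGroup E]
    [MeasurableSpace E] [OpensMeasurableSpace E] (μ : Measure E) {f : E → ℝ}
    (hf : Integrable f μ) (hf0 : f 0 = 0) :
    Tendsto (fun ε => ∫ z in {z | ε ≤ ‖z‖}, f z ∂μ) (𝓝[>] 0) (𝓝 (∫ z, f z ∂μ)) := by
  have hmeas (ε : ℝ) : MeasurableSet {z : E | ε ≤ ‖z‖} :=
    measurableSet_le measurable_const measurable_norm
  simp_rw [← integral_indicator (hmeas _)]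
  refine tendsto_integral_filter_of_dominated_convergence (fun z => ‖f z‖)
    (.of_forall fun ε => (hf.indicator (hmeas ε)).aestronglyMeasurable)
    (.of_forall fun ε => .of_forall fun z => norm_indicator_le_norm_self _ _) hf.norm
    (.of_forall fun z => tendsto_const_nhds.congr' ?_)
  rcases eq_or_ne z 0 with rfl | hz
  · exact .of_forall fun ε => by simp [indicator_apply, hf0]
  · filter_upwards [Ioo_mem_nhdsGT (norm_pos_iff.2 hz)] with ε hε
    exact (indicator_of_mem (show z ∈ {z : E | ε ≤ ‖z‖} from hε.2.le) f).symm

theorem lkHas_integral_of_integrable {n : ℕ} {k u : Euc n → ℝ} {x : Euc n}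
    (h : Integrable (fun z => (u x - u (x + z)) * k z)) :
    LkHas k u x (∫ z, (u x - u (x + z)) * k z) :=
  tendsto_setIntegral_le_norm_nhdsGT_zero volume h (by simp)

theorem IsAdmissibleKernel.ae_abs_le {n : ℕ} {s κ₁ κ₂ : ℝ} {k : Euc n → ℝ}
    (hk : IsAdmissibleKernel n s κ₁ κ₂ k) (hκ₁ : 0 ≤ κ₁) :
    ∀ᵐ z, |k z| ≤ κ₂ * ‖z‖ ^ (-(n + 2 * s)) := by
  filter_upwards [hk.2.2] with z ⟨h1, h2⟩
  rw [Real.rpow_neg (norm_nonneg z), ← div_eq_mul_inv,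
    abs_of_nonneg ((div_nonneg hκ₁ (by positivity)).trans h1)]
  exact h2

theorem Lk_of_lipschitz_s_small_general
    (n : ℕ) (s κ₁ κ₂ : ℝ) (Ω : Set (Euc n))
    (hs : s ∈ Set.Ioo (0 : ℝ) (1 / 2)) (hκ₁ : 0 < κ₁) (hκ : κ₁ ≤ κ₂)
    (hΩb : Bornology.IsBounded Ω) :
    ∃ C > (0 : ℝ), ∀ k : Euc n → ℝ, IsAdmissibleKernel n s κ₁ κ₂ k →
      ∀ u : Euc n → ℝ, ∀ M : ℝ, 0 ≤ M → Continuous u →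
      (∀ x ∉ Ω, u x = 0) → (∀ x ∈ Ω, ∀ y ∈ Ω, |u x - u y| ≤ M * ‖x - y‖) →
      (∀ x ∈ Ω, LkExistsAt k u x) ∧
      (∀ x ∈ Ω, |Lk k u x| ≤ C * M) ∧
      ∀ x ∈ Ω, ∀ y ∈ Ω, |Lk k u x - Lk k u y| ≤ C * M * ‖x - y‖ ^ (1 - 2 * s) := by
  obtain ⟨hs0, hs1⟩ := hs
  have hκ₂ : 0 ≤ κ₂ := hκ₁.le.trans hκ
  obtain ⟨hγ, hγ1⟩ : (finrank ℝ (Euc n) : ℝ) < n + 2 * s ∧ n + 2 * s < finrank ℝ (Euc n) + 1 := by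
    rw [finrank_euclideanSpace_fin]; constructor <;> linarith
  set A := ∫ z in ball (0 : Euc n) 1, ‖z‖ ^ (1 - (n + 2 * s))
  set B := ∫ z in (ball (0 : Euc n) 1)ᶜ, ‖z‖ ^ (-(n + 2 * s))
  have hA : 0 ≤ A := setIntegral_nonneg measurableSet_ball fun z _ => by positivity
  have hB : 0 ≤ B := setIntegral_nonneg measurableSet_ball.compl fun z _ => by positivity
  set C := κ₂ * (2 * A + (2 + diam Ω) * B) + 1
  have hCA : κ₂ * (A + diam Ω * B) ≤ C := by nlinarith [mul_nonneg hκ₂ hA, mul_nonneg hκ₂ hB]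
  have hCH : 2 * κ₂ * (A + B) ≤ C := by
    nlinarith [mul_nonneg hκ₂ hA, mul_nonneg (mul_nonneg hκ₂ (diam_nonneg (s := Ω))) hB]
  refine ⟨C, by positivity, fun k hk u M hM hu hu0 hlip => ?_⟩
  have hkb := hk.ae_abs_le hκ₁.le
  have hglob := abs_sub_le_of_lipschitzOn_of_eq_zero hM hu hu0 hlip
  have hpt (x) (hx : x ∈ Ω) := integrable_and_abs_integral_sub_mul_le volume hγ hγ1
    hk.1.aestronglyMeasurable hkb hu hglob (abs_sub_le_mul_diam hM hΩb hu hu0 hlip hx)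
  have hLk (x) (hx : x ∈ Ω) := lkHas_integral_of_integrable (hpt x hx).1
  refine ⟨fun x hx => ⟨_, hLk x hx⟩, fun x hx => ?_, fun x hx y hy => ?_⟩
  · rw [Lk, (hLk x hx).limUnder_eq]
    exact (hpt x hx).2.trans (by rw [mul_right_comm]; exact mul_le_mul_of_nonneg_right hCA hM)
  · rw [Lk, Lk, (hLk x hx).limUnder_eq, (hLk y hy).limUnder_eq]
    refine (abs_integral_sub_mul_sub_le volume hγ hγ1 hk.1.aestronglyMeasurable hkb hu hglob
      (hpt x hx).1 (hpt y hy).1).trans ?_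
    rw [finrank_euclideanSpace_fin, show (n : ℝ) + 1 - (n + 2 * s) = 1 - 2 * s by ring,
      mul_right_comm _ M]
    gcongr

/-- For `s < 1/2`, `L_k` maps Lipschitz functions vanishing outside
`Ω` to `C^{1-2s}(Ω)`, with `‖L_k u‖_{C^{1-2s}(Ω)} ≤ C ‖Du‖_{L^∞(Ω)}`. -/
theorem Lk_of_lipschitz_s_small
    (n : ℕ) (s κ₁ κ₂ : ℝ) (Ω : Set (Euc n))
    (hs : s ∈ Set.Ioo (0 : ℝ) (1 / 2)) (hκ₁ : 0 < κ₁) (hκ : κ₁ ≤ κ₂)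
    (hΩo : IsOpen Ω) (hΩb : Bornology.IsBounded Ω) (hΩlip : BoundaryLipschitz n Ω) :
    ∃ C > (0 : ℝ), ∀ k : Euc n → ℝ, IsAdmissibleKernel n s κ₁ κ₂ k →
      ∀ u : Euc n → ℝ, ∀ M : ℝ, 0 ≤ M → Continuous u →
      (∀ x ∉ Ω, u x = 0) → (∀ x ∈ Ω, ∀ y ∈ Ω, |u x - u y| ≤ M * ‖x - y‖) →
      (∀ x ∈ Ω, LkExistsAt k u x) ∧
      (∀ x ∈ Ω, |Lk k u x| ≤ C * M) ∧
      ∀ x ∈ Ω, ∀ y ∈ Ω, |Lk k u x - Lk k u y| ≤ C * M * ‖x - y‖ ^ (1 - 2 * s) :=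
  Lk_of_lipschitz_s_small_general n s κ₁ κ₂ Ω hs hκ₁ hκ hΩb
end
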